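/- arXiv:1711.02135 — 3 statements merged into one kernel-verified Lean document; each statement's English description precedes it below -/
import Mathlib

section
/- Let ℝ^d = ⊕_{i=1}^k E^i be an orthogonal decomposition, λ'_1 > ... > λ'_k real numbers, κ := (1/2)·min_i(λ'_i − λ'_{i+1}), and 0 < δ < κ/2. Let A ∈ GL(d,ℝ) preserve each E^i with ‖A|_{E^i}‖ and ‖(A|_{E^i})⁻¹‖⁻¹ lying in (e^{λ'_i − δ/4}, e^{λ'_i + δ/4}). For j < k and γ > 0, define the cone K^j_γ := {v : ‖∑_{i≥j+1} v^i‖ < γ·‖∑_{i≤j} v^i‖} where v = ∑ v^i is the decomposition along the E^i. Then A(K^j_γ) ⊂ K^j_{γ·e^{−κ+δ/4}} for every j and every γ > 0. -/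
noncomputable section

abbrev Euc (d : ℕ) := EuclideanSpace ℝ (Fin d)

/-- Orthogonal projection onto a subspace of ℝ^d, as a map into the ambient space. -/
noncomputable def projS {d : ℕ} (V : Submodule ℝ (Euc d)) : Euc d →L[ℝ] Euc d :=
  V.subtypeL ∘L V.orthogonalProjectionOnto

/-- `Vlow E j` = span of `E^1, ..., E^j` (the subspaces of paper-index `≤ j`, i.e.
0-indexed `i` with `(i : ℕ) < j`). -/
def Vlow {d k : ℕ} (E : Fin k → Submodule ℝ (Euc d)) (j : ℕ) : Submodule ℝ (Euc d) :=
  ⨆ (i : Fin k) (_ : (i : ℕ) < j), E i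

/-- The cone `K^j_γ = {v : ‖∑_{i≥j+1} v^i‖ < γ ‖∑_{i≤j} v^i‖}`; since the splitting is
orthogonal, `∑_{i≤j} v^i` is the orthogonal projection of `v` onto `E^1 ⊕ ... ⊕ E^j`. -/
def coneU {d k : ℕ} (E : Fin k → Submodule ℝ (Euc d)) (j : ℕ) (γ : ℝ) : Set (Euc d) :=
  {v | ‖v - projS (Vlow E j) v‖ < γ * ‖projS (Vlow E j) v‖}

/-! Since `A` preserves every `E i`, it preserves `U = E^1 ⊕ ⋯ ⊕ E^j` and, the splitting being
orthogonal and spanning, also `Uᗮ = E^{j+1} ⊕ ⋯ ⊕ E^k`; so `A` commutes with the orthogonal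
projection onto `U`. By Pythagoras, `A` expands `U` by at least `e^{λ'_j - δ/4}` and `Uᗮ` by at
most `e^{λ'_{j+1} + δ/4}`, so the aperture of the cone around `U` gets multiplied by at most
`e^{λ'_{j+1} - λ'_j + δ/2} ≤ e^{-2κ + δ/2} ≤ e^{-κ + δ/4}`. -/

section OrthogonalSplitting

variable {𝕜 F ι : Type*} [RCLike 𝕜] [NormedAddCommGroup F] [InnerProductSpace 𝕜 F]

theorem Submodule.mapsTo_biSup {R M : Type*} [Semiring R] [AddCommMonoid M] [Module R M]
    {E : ι → Submodule R M} {P : ι → Prop} {A : M →ₗ[R] M}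
    (hA : ∀ i, P i → Set.MapsTo A (E i) (E i)) :
    Set.MapsTo A ↑(⨆ i, ⨆ (_ : P i), E i) ↑(⨆ i, ⨆ (_ : P i), E i : Submodule R M) :=
  show _ ≤ Submodule.comap A (⨆ i, ⨆ (_ : P i), E i) from
    iSup₂_le fun i hi _ hx => Submodule.mem_comap.2 <|
      le_iSup₂ (f := fun i (_ : P i) => E i) i hi (hA i hi hx)

namespace OrthogonalFamily

variable {E : ι → Submodule 𝕜 F} (hE : OrthogonalFamily 𝕜 (fun i => E i) fun i => (E i).subtypeₗᵢ)
include hE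

theorem norm_sq_apply_sum {A : F →L[𝕜] F} (hA : ∀ i, Set.MapsTo A (E i) (E i))
    (f : ∀ i, E i) (s : Finset ι) :
    ‖A (∑ i ∈ s, (f i : F))‖ ^ 2 = ∑ i ∈ s, ‖A (f i)‖ ^ 2 := by
  simpa [map_sum] using hE.norm_sum (fun i => ⟨A (f i), hA i (f i).2⟩) s

theorem norm_apply_le_norm_apply_of_mem_biSup {P : ι → Prop} {A B : F →L[𝕜] F}
    (hA : ∀ i, Set.MapsTo A (E i) (E i)) (hB : ∀ i, Set.MapsTo B (E i) (E i))
    (hAB : ∀ i, P i → ∀ v ∈ E i, ‖A v‖ ≤ ‖B v‖) {v : F} (hv : v ∈ ⨆ i, ⨆ (_ : P i), E i) :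
    ‖A v‖ ≤ ‖B v‖ := by
  classical
  rw [iSup_subtype', Submodule.mem_iSup_iff_exists_dfinsupp'] at hv
  obtain ⟨f, rfl⟩ := hv
  have hE' := hE.comp (Subtype.val_injective (p := P))
  rw [← pow_le_pow_iff_left₀ (norm_nonneg _) (norm_nonneg _) two_ne_zero, DFinsupp.sum,
    hE'.norm_sq_apply_sum (fun i => hA i) f, hE'.norm_sq_apply_sum (fun i => hB i) f]
  gcongr with i
  exact hAB i i.2 _ (f i).2

theorem mul_norm_le_norm_apply_of_mem_biSup {P : ι → Prop} {A : F →L[𝕜] F}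
    (hA : ∀ i, Set.MapsTo A (E i) (E i)) {c : ℝ} (hc : 0 ≤ c)
    (h : ∀ i, P i → ∀ v ∈ E i, c * ‖v‖ ≤ ‖A v‖) {v : F} (hv : v ∈ ⨆ i, ⨆ (_ : P i), E i) :
    c * ‖v‖ ≤ ‖A v‖ := by
  have := hE.norm_apply_le_norm_apply_of_mem_biSup (A := (c : 𝕜) • ContinuousLinearMap.id 𝕜 F)
    (fun i _ hx => (E i).smul_mem _ hx) hA
    (fun i hi v hv => by simpa [norm_smul, abs_of_nonneg hc] using h i hi v hv) hv
  simpa [norm_smul, abs_of_nonneg hc] using this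

theorem norm_apply_le_mul_norm_of_mem_biSup {P : ι → Prop} {A : F →L[𝕜] F}
    (hA : ∀ i, Set.MapsTo A (E i) (E i)) {C : ℝ} (hC : 0 ≤ C)
    (h : ∀ i, P i → ∀ v ∈ E i, ‖A v‖ ≤ C * ‖v‖) {v : F} (hv : v ∈ ⨆ i, ⨆ (_ : P i), E i) :
    ‖A v‖ ≤ C * ‖v‖ := by
  have := hE.norm_apply_le_norm_apply_of_mem_biSup (B := (C : 𝕜) • ContinuousLinearMap.id 𝕜 F) hA
    (fun i _ hx => (E i).smul_mem _ hx)
    (fun i hi v hv => by simpa [norm_smul, abs_of_nonneg hC] using h i hi v hv) hv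
  simpa [norm_smul, abs_of_nonneg hC] using this

theorem biSup_not_eq_orthogonal (htop : ⨆ i, E i = ⊤) (P : ι → Prop) :
    ⨆ i, ⨆ (_ : ¬P i), E i = (⨆ i, ⨆ (_ : P i), E i)ᗮ := by
  refine (le_iff_eq_of_codisjoint_of_disjoint ?_ (Submodule.orthogonal_disjoint _)).1 ?_
  · rw [codisjoint_iff, eq_top_iff, ← htop]
    refine iSup_le fun i => ?_
    by_cases hi : P i
    · exact le_sup_of_le_right (le_iSup₂ (f := fun i (_ : P i) => E i) i hi)
    · exact le_sup_of_le_left (le_iSup₂ (f := fun i (_ : ¬P i) => E i) i hi)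
  · refine Submodule.isOrtho_iff_le.1 ?_
    simp only [Submodule.isOrtho_iSup_left, Submodule.isOrtho_iSup_right]
    intro i hi i' hi'
    exact hE.isOrtho (by rintro rfl; contradiction)

end OrthogonalFamily

namespace Submodule

variable (U : Submodule 𝕜 F) [U.HasOrthogonalProjection]

theorem starProjection_map_of_mapsTo {A : F →L[𝕜] F} (hU : Set.MapsTo A U U)
    (hUperp : Set.MapsTo A Uᗮ Uᗮ) (v : F) : U.starProjection (A v) = A (U.starProjection v) :=
  U.eq_starProjection_of_mem_orthogonal (hU (U.starProjection_apply_mem v)) <|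
    map_sub A v _ ▸ hUperp (U.sub_starProjection_mem_orthogonal v)

def projCone (γ : ℝ) : Set F :=
  {v | ‖v - U.starProjection v‖ < γ * ‖U.starProjection v‖}

variable {U}

theorem projCone_mono {γ γ' : ℝ} (h : γ ≤ γ') : U.projCone γ ⊆ U.projCone γ' :=
  fun _ hv => hv.trans_le (mul_le_mul_of_nonneg_right h (norm_nonneg _))

theorem image_projCone_subset {A : F →L[𝕜] F} (hU : Set.MapsTo A U U)
    (hUperp : Set.MapsTo A Uᗮ Uᗮ) {c C : ℝ} (hc : 0 < c) (hC : 0 < C)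
    (hlow : ∀ u ∈ U, c * ‖u‖ ≤ ‖A u‖) (hhigh : ∀ w ∈ Uᗮ, ‖A w‖ ≤ C * ‖w‖) (γ : ℝ) :
    A '' U.projCone γ ⊆ U.projCone (γ * (C / c)) := by
  rintro _ ⟨v, hv, rfl⟩
  have hγ : 0 < γ := pos_of_mul_pos_left ((norm_nonneg _).trans_lt hv) (norm_nonneg _)
  show ‖A v - U.starProjection (A v)‖ < γ * (C / c) * ‖U.starProjection (A v)‖
  rw [U.starProjection_map_of_mapsTo hU hUperp, ← map_sub]
  calc ‖A (v - U.starProjection v)‖ ≤ C * ‖v - U.starProjection v‖ :=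
        hhigh _ (U.sub_starProjection_mem_orthogonal v)
    _ < C * (γ * ‖U.starProjection v‖) := by gcongr; exact hv
    _ = γ * (C / c) * (c * ‖U.starProjection v‖) := by field_simp
    _ ≤ γ * (C / c) * ‖A (U.starProjection v)‖ := by
        gcongr; exact hlow _ (U.starProjection_apply_mem v)

end Submodule

end OrthogonalSplitting

section ExponentialRates

variable {F 𝓕 ι : Type*} [SeminormedAddCommGroup F] [FunLike 𝓕 F F] [Preorder ι]
  {lam : ι → ℝ} {ε : ℝ} {E : ι → Set F} {A : 𝓕}

theorem exp_sub_mul_norm_le_norm_apply (hlam : Antitone lam)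
    (hA : ∀ i, ∀ v ∈ E i, v ≠ 0 → Real.exp (lam i - ε) * ‖v‖ < ‖A v‖) {i i₀ : ι} (hi : i ≤ i₀) :
    ∀ v ∈ E i, Real.exp (lam i₀ - ε) * ‖v‖ ≤ ‖A v‖ := by
  intro v hv
  rcases eq_or_ne v 0 with rfl | hv0
  · simp
  calc Real.exp (lam i₀ - ε) * ‖v‖ ≤ Real.exp (lam i - ε) * ‖v‖ := by gcongr; exact hlam hi
    _ ≤ ‖A v‖ := (hA i v hv hv0).le

theorem norm_apply_le_exp_add_mul_norm [ZeroHomClass 𝓕 F F] (hlam : Antitone lam)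
    (hA : ∀ i, ∀ v ∈ E i, v ≠ 0 → ‖A v‖ < Real.exp (lam i + ε) * ‖v‖) {i i₀ : ι} (hi : i₀ ≤ i) :
    ∀ v ∈ E i, ‖A v‖ ≤ Real.exp (lam i₀ + ε) * ‖v‖ := by
  intro v hv
  rcases eq_or_ne v 0 with rfl | hv0
  · simp
  calc ‖A v‖ ≤ Real.exp (lam i + ε) * ‖v‖ := (hA i v hv hv0).le
    _ ≤ Real.exp (lam i₀ + ε) * ‖v‖ := by gcongr; exact hlam hi

end ExponentialRates

theorem cone_contraction {d k : ℕ} (E : Fin k → Submodule ℝ (Euc d))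
    (horth : ∀ i j : Fin k, i ≠ j → ∀ v ∈ E i, ∀ w ∈ E j, (inner ℝ v w : ℝ) = 0)
    (hspan : (⨆ i, E i) = ⊤)
    (lam : Fin k → ℝ) (hlam : StrictAnti lam) (κ δ : ℝ)
    (hκ : IsLeast {x : ℝ | ∃ i j : Fin k, (j : ℕ) = (i : ℕ) + 1 ∧ x = (lam i - lam j) / 2} κ)
    (hδ : 0 < δ) (hδκ : δ < κ / 2)
    (A : Euc d →L[ℝ] Euc d)
    (hApres : ∀ i : Fin k, ∀ v ∈ E i, A v ∈ E i)
    (hAnorm : ∀ i : Fin k, ∀ v ∈ E i, v ≠ 0 →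
      Real.exp (lam i - δ / 4) * ‖v‖ < ‖A v‖ ∧ ‖A v‖ < Real.exp (lam i + δ / 4) * ‖v‖) :
    ∀ j : ℕ, 1 ≤ j → j ≤ k - 1 → ∀ γ : ℝ, 0 < γ →
      ⇑A '' coneU E j γ ⊆ coneU E j (γ * Real.exp (-κ + δ / 4)) := by
  intro j hj1 hjk γ hγ
  have hE : OrthogonalFamily ℝ (fun i => E i) fun i => (E i).subtypeₗᵢ :=
    orthogonalFamily_iff_pairwise.2 fun i i' hii' =>
      Submodule.isOrtho_iff_inner_eq.2 (horth i i' hii')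
  have hA : ∀ i, Set.MapsTo A (E i) (E i) := fun i v hv => hApres i v hv
  -- `i₁`, `i₂` are the paper's indices `j` and `j + 1`.
  let i₁ : Fin k := ⟨j - 1, by omega⟩
  let i₂ : Fin k := ⟨j, by omega⟩
  have hgap : κ ≤ (lam i₁ - lam i₂) / 2 := hκ.2 ⟨i₁, i₂, show j = j - 1 + 1 by omega, rfl⟩
  set U := Vlow E j
  have hperp : ⨆ (i : Fin k) (_ : ¬(i : ℕ) < j), E i = Uᗮ := hE.biSup_not_eq_orthogonal hspan _
  have hAU : Set.MapsTo A U U := Submodule.mapsTo_biSup fun i _ => hA i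
  have hAUperp : Set.MapsTo A Uᗮ Uᗮ := hperp ▸ Submodule.mapsTo_biSup fun i _ => hA i
  have hlow : ∀ u ∈ U, Real.exp (lam i₁ - δ / 4) * ‖u‖ ≤ ‖A u‖ := fun u hu =>
    hE.mul_norm_le_norm_apply_of_mem_biSup hA (Real.exp_pos _).le (fun i hi =>
      exp_sub_mul_norm_le_norm_apply hlam.antitone (fun i v hv hv0 => (hAnorm i v hv hv0).1)
        (Fin.le_def.2 (show (i : ℕ) ≤ j - 1 by omega))) hu
  have hhigh : ∀ w ∈ Uᗮ, ‖A w‖ ≤ Real.exp (lam i₂ + δ / 4) * ‖w‖ := hperp ▸ fun w hw =>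
    hE.norm_apply_le_mul_norm_of_mem_biSup hA (Real.exp_pos _).le (fun i hi =>
      norm_apply_le_exp_add_mul_norm hlam.antitone (fun i v hv hv0 => (hAnorm i v hv hv0).2)
        (Fin.le_def.2 (show j ≤ (i : ℕ) by omega))) hw
  calc ⇑A '' coneU E j γ
      ⊆ U.projCone (γ * (Real.exp (lam i₂ + δ / 4) / Real.exp (lam i₁ - δ / 4))) :=
        Submodule.image_projCone_subset hAU hAUperp (Real.exp_pos _) (Real.exp_pos _) hlow hhigh γ
    _ ⊆ coneU E j (γ * Real.exp (-κ + δ / 4)) := by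
        refine Submodule.projCone_mono ?_
        rw [← Real.exp_sub]
        gcongr
        linarith
end
end

section
/- Let ℝ^d = ⊕_{i=1}^k E^i be an orthogonal decomposition, λ'_1 > ... > λ'_k real numbers, κ := (1/2)min_i(λ'_i−λ'_{i+1}) and 0 < δ < κ/2. Then there exist γ > 0 and α_1 > 0 such that: for every sequence (A_n) of invertible linear maps preserving each E^i with ‖A_n|_{E^i}‖, ‖(A_n|_{E^i})⁻¹‖⁻¹ ∈ (e^{λ'_i − δ/4}, e^{λ'_i + δ/4}), and every sequence (C_n) in GL(d,ℝ) with ‖A_n − C_n‖ < α_1 for all n, writing A^{(n)} = A_n ··· A_1 and C^{(n)} = C_n ··· C_1, one has |(1/n)·log σ_i(A^{(n)}) − (1/n)·log σ_i(C^{(n)})| < δ for all n ≥ 1 and all i ∈ {1,...,d}. -/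
noncomputable section

noncomputable def semiaxis {d : ℕ} (E : Set (Euc d)) (i : ℕ) : ℝ :=
  sInf {r : ℝ | ∃ V : Submodule ℝ (Euc d), Module.finrank ℝ V = d - i ∧
    ∀ v ∈ E ∩ (V : Set (Euc d)), ‖v‖ ≤ r}

noncomputable def sv {d : ℕ} (A : Euc d →L[ℝ] Euc d) (i : ℕ) : ℝ :=
  semiaxis (⇑A '' Metric.closedBall (0 : Euc d) 1) i

/-- `compSeq A n = A_n ∘ ... ∘ A_1`. -/
noncomputable def compSeq {d : ℕ} (A : ℕ → (Euc d →L[ℝ] Euc d)) : ℕ → (Euc d →L[ℝ] Euc d)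
  | 0 => ContinuousLinearMap.id ℝ (Euc d)
  | n + 1 => A (n + 1) ∘L compSeq A n

/-!
Each `A_n` is block diagonal, stretching `E^j` by roughly `e^{λ_j}`, so for every `t` the sum `F`
of the first `t + 1` blocks is expanded by at least `e^{λ_t - δ/4}` while `Fᗮ` is expanded by at
most `e^{λ_{t+1} + δ/4} ≤ e^{-δ/2} e^{λ_t - δ/4}`. A perturbation `C_n` of size
`ε` keeps the cone `{v : ‖v_{Fᗮ}‖ ≤ ‖v_F‖}` invariant and still expands `F` by
`e^{λ_t - δ/4} - 2ε ≥ e^{λ_t - 3δ/8}`; by min-max this bounds `σ_i(C^{(n)})` from below for the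
indices `i` belonging to block `t`. The same argument for the inverses `C_n⁻¹`, which are close to
the block diagonal maps `A_n⁻¹`, gives the upper bound. Hence both `(1/n) log σ_i(A^{(n)})` and
`(1/n) log σ_i(C^{(n)})` lie within `3δ/8` of `λ_t`.
-/

open Real Submodule Finset Module

theorem ContinuousLinearEquiv.norm_symm_sub_symm_le {𝕜 V : Type*} [NontriviallyNormedField 𝕜]
    [NormedAddCommGroup V] [NormedSpace 𝕜 V] {e f : V ≃L[𝕜] V} {M α : ℝ}
    (he : ‖(e.symm : V →L[𝕜] V)‖ ≤ M) (hef : ‖(e : V →L[𝕜] V) - f‖ ≤ α)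
    (hMα : 2 * M * α ≤ 1) :
    ‖(f.symm : V →L[𝕜] V) - e.symm‖ ≤ 2 * M ^ 2 * α := by
  have hM : 0 ≤ M := (norm_nonneg _).trans he
  have hα : 0 ≤ α := (norm_nonneg _).trans hef
  have hsymm : ∀ w, ‖e.symm w‖ ≤ M * ‖w‖ := (e.symm : V →L[𝕜] V).le_of_opNorm_le he
  refine ContinuousLinearMap.opNorm_le_bound _ (by positivity) fun z => ?_
  set u := f.symm z
  have hdiff : ‖e u - z‖ ≤ α * ‖u‖ := by
    have : e u - z = ((e : V →L[𝕜] V) - f) u := by simp [u]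
    exact this ▸ ((e : V →L[𝕜] V) - f).le_of_opNorm_le hef u
  have hu : ‖u‖ ≤ M * (‖z‖ + α * ‖u‖) := calc
    ‖u‖ = ‖e.symm (e u)‖ := by simp
    _ ≤ M * ‖e u‖ := hsymm _
    _ ≤ M * (‖z‖ + α * ‖u‖) := by
      gcongr
      calc ‖e u‖ = ‖z + (e u - z)‖ := by abel_nf
        _ ≤ ‖z‖ + α * ‖u‖ := (norm_add_le _ _).trans (by gcongr)
  calc ‖((f.symm : V →L[𝕜] V) - e.symm) z‖ = ‖e.symm (e u - z)‖ := by simp [u]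
    _ ≤ M * (α * ‖u‖) := (hsymm _).trans (by gcongr)
    _ ≤ M * (α * (2 * M * ‖z‖)) := by gcongr; nlinarith [norm_nonneg u, mul_nonneg hM hα]
    _ = 2 * M ^ 2 * α * ‖z‖ := by ring

section OrthogonalFamily

variable {ι V : Type*} [NormedAddCommGroup V] [InnerProductSpace ℝ V] {E : ι → Submodule ℝ V}
  (hE : OrthogonalFamily ℝ (fun i => E i) fun i => (E i).subtypeₗᵢ)
include hE

theorem OrthogonalFamily.norm_sum_sq_of_mem {s : Finset ι} {g : ι → V} (hg : ∀ i ∈ s, g i ∈ E i) :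
    ‖∑ i ∈ s, g i‖ ^ 2 = ∑ i ∈ s, ‖g i‖ ^ 2 := by
  classical
  let l : ∀ i, E i := fun i => if h : i ∈ s then ⟨g i, hg i h⟩ else 0
  have hl : ∀ i ∈ s, (E i).subtypeₗᵢ (l i) = g i := fun i hi => by simp [l, hi]
  have hnorm : ∀ i ∈ s, ‖l i‖ = ‖g i‖ := fun i hi => by
    rw [← hl i hi, LinearIsometry.norm_map]
  rw [← sum_congr rfl hl, hE.norm_sum l s, sum_congr rfl fun i hi => by rw [hnorm i hi]]

theorem OrthogonalFamily.norm_map_le {s : Finset ι} {G : V →L[ℝ] V}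
    (hG : ∀ i ∈ s, ∀ v ∈ E i, G v ∈ E i) {c : ℝ} (hc : 0 ≤ c)
    (h : ∀ i ∈ s, ∀ v ∈ E i, ‖G v‖ ≤ c * ‖v‖) {x : V} (hx : x ∈ ⨆ i ∈ s, E i) :
    ‖G x‖ ≤ c * ‖x‖ := by
  obtain ⟨μ, rfl⟩ := (mem_iSup_finset_iff_exists_sum _ _).1 hx
  refine le_of_pow_le_pow_left₀ two_ne_zero (by positivity) ?_
  rw [map_sum, hE.norm_sum_sq_of_mem fun i hi => hG i hi _ (μ i).2, mul_pow,
    hE.norm_sum_sq_of_mem fun i _ => (μ i).2, mul_sum]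
  gcongr with i hi
  rw [← mul_pow]
  exact pow_le_pow_left₀ (norm_nonneg _) (h i hi _ (μ i).2) 2

theorem OrthogonalFamily.le_norm_map {s : Finset ι} {G : V →L[ℝ] V}
    (hG : ∀ i ∈ s, ∀ v ∈ E i, G v ∈ E i) {c : ℝ} (hc : 0 ≤ c)
    (h : ∀ i ∈ s, ∀ v ∈ E i, c * ‖v‖ ≤ ‖G v‖) {x : V} (hx : x ∈ ⨆ i ∈ s, E i) :
    c * ‖x‖ ≤ ‖G x‖ := by
  obtain ⟨μ, rfl⟩ := (mem_iSup_finset_iff_exists_sum _ _).1 hx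
  refine le_of_pow_le_pow_left₀ two_ne_zero (norm_nonneg _) ?_
  rw [map_sum, hE.norm_sum_sq_of_mem fun i hi => hG i hi _ (μ i).2, mul_pow,
    hE.norm_sum_sq_of_mem fun i _ => (μ i).2, mul_sum]
  gcongr with i hi
  rw [← mul_pow]
  exact pow_le_pow_left₀ (by positivity) (h i hi _ (μ i).2) 2

theorem OrthogonalFamily.orthogonal_iSup_eq [Fintype ι] [DecidableEq ι]
    (hspan : ⨆ i, E i = ⊤) (s : Finset ι) :
    (⨆ i ∈ s, E i)ᗮ = ⨆ i ∈ sᶜ, E i := by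
  refine (eq_of_le_of_inf_le_of_sup_le (z := ⨆ i ∈ s, E i) ?_ ?_ ?_).symm
  · rw [← isOrtho_iff_le]
    simp only [isOrtho_iSup_left, isOrtho_iSup_right]
    intro i hi j hj
    exact hE.pairwise fun hij => by simp_all
  · rw [inf_comm, inf_orthogonal_eq_bot]
    exact bot_le
  · refine le_top.trans ?_
    rw [← hspan]
    refine iSup_le fun i => ?_
    by_cases hi : i ∈ s
    · exact le_sup_of_le_right (le_biSup E hi)
    · exact le_sup_of_le_left (le_biSup E (mem_compl.2 hi))

end OrthogonalFamily

section Cone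

variable {V : Type*} [NormedAddCommGroup V] [InnerProductSpace ℝ V]

structure DominatesOn (G : V →L[ℝ] V) (F : Submodule ℝ V) (a b : ℝ) : Prop where
  mapsTo : ∀ x ∈ F, G x ∈ F
  mapsTo_orthogonal : ∀ y ∈ Fᗮ, G y ∈ Fᗮ
  le_norm : ∀ x ∈ F, a * ‖x‖ ≤ ‖G x‖
  norm_le : ∀ y ∈ Fᗮ, ‖G y‖ ≤ b * ‖y‖

variable {F : Submodule ℝ V} [F.HasOrthogonalProjection] {a b ε : ℝ}

theorem DominatesOn.cone_step {G B : V →L[ℝ] V} (hG : DominatesOn G F a b) (hBG : ‖B - G‖ ≤ ε)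
    (hb : 0 ≤ b) (hab : b + 4 * ε ≤ a) {v : V}
    (hv : ‖Fᗮ.starProjection v‖ ≤ ‖F.starProjection v‖) :
    (a - 2 * ε) * ‖F.starProjection v‖ ≤ ‖F.starProjection (B v)‖ ∧
      ‖Fᗮ.starProjection (B v)‖ ≤ ‖F.starProjection (B v)‖ := by
  set x := F.starProjection v
  set y := Fᗮ.starProjection v
  set e := (B - G) v
  have hε : 0 ≤ ε := (norm_nonneg _).trans hBG
  have hx : x ∈ F := F.starProjection_apply_mem v
  have hy : y ∈ Fᗮ := Fᗮ.starProjection_apply_mem v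
  have hxy : x + y = v := starProjection_add_starProjection_orthogonal v
  -- inside the cone `‖v‖ ≤ 2 ‖x‖`, so the perturbation is small compared to `x`
  have he : ‖e‖ ≤ 2 * ε * ‖x‖ := calc
    ‖e‖ ≤ ε * ‖v‖ := (B - G).le_of_opNorm_le hBG v
    _ ≤ ε * (‖x‖ + ‖y‖) := by rw [← hxy]; gcongr; exact norm_add_le x y
    _ ≤ 2 * ε * ‖x‖ := by nlinarith
  have hBv : B v = G x + (G y + e) := by
    simp only [e, sub_apply, ← hxy, map_add]; abel
  have hP : F.starProjection (B v) = G x + F.starProjection e := by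
    rw [hBv, map_add, map_add, starProjection_eq_self_iff.2 (hG.mapsTo x hx),
      (F.starProjection_apply_eq_zero_iff).2 (hG.mapsTo_orthogonal y hy), zero_add]
  have hQ : Fᗮ.starProjection (B v) = G y + Fᗮ.starProjection e := by
    rw [hBv, map_add, map_add, starProjection_eq_self_iff.2 (hG.mapsTo_orthogonal y hy),
      (Fᗮ.starProjection_apply_eq_zero_iff).2 (F.le_orthogonal_orthogonal (hG.mapsTo x hx)),
      zero_add]
  have hPBv : (a - 2 * ε) * ‖x‖ ≤ ‖F.starProjection (B v)‖ := by
    rw [hP]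
    calc (a - 2 * ε) * ‖x‖ = a * ‖x‖ - 2 * ε * ‖x‖ := by ring
      _ ≤ ‖G x‖ - ‖F.starProjection e‖ :=
        sub_le_sub (hG.le_norm x hx) ((F.norm_starProjection_apply_le e).trans he)
      _ ≤ ‖G x + F.starProjection e‖ := norm_sub_le_norm_add _ _
  refine ⟨hPBv, ?_⟩
  calc ‖Fᗮ.starProjection (B v)‖ ≤ ‖G y‖ + ‖Fᗮ.starProjection e‖ := hQ ▸ norm_add_le _ _
    _ ≤ b * ‖x‖ + 2 * ε * ‖x‖ :=
      add_le_add ((hG.norm_le y hy).trans (by gcongr))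
        ((Fᗮ.norm_starProjection_apply_le e).trans he)
    _ ≤ (a - 2 * ε) * ‖x‖ := by nlinarith [norm_nonneg x]
    _ ≤ _ := hPBv

theorem cone_step_list_prod (hb : 0 ≤ b) (hab : b + 4 * ε ≤ a) :
    ∀ l : List (V ≃L[ℝ] V), (∀ B ∈ l, ∃ G, DominatesOn G F a b ∧ ‖(B : V →L[ℝ] V) - G‖ ≤ ε) →
      ∀ v, ‖Fᗮ.starProjection v‖ ≤ ‖F.starProjection v‖ →
        (a - 2 * ε) ^ l.length * ‖F.starProjection v‖ ≤ ‖F.starProjection (l.prod v)‖ ∧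
          ‖Fᗮ.starProjection (l.prod v)‖ ≤ ‖F.starProjection (l.prod v)‖
  | [], _, v, hv => ⟨by rw [List.length_nil, pow_zero, one_mul]; exact le_rfl, hv⟩
  | B :: l, hl, v, hv => by
    obtain ⟨G, hG, hBG⟩ := hl B List.mem_cons_self
    obtain ⟨ih, hcone⟩ :=
      cone_step_list_prod hb hab l (fun B hB => hl B (List.mem_cons_of_mem _ hB)) v hv
    obtain ⟨hstep, hcone'⟩ := hG.cone_step hBG hb hab hcone
    have : 0 ≤ a - 2 * ε := by linarith [(norm_nonneg _).trans hBG]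
    refine ⟨?_, hcone'⟩
    calc (a - 2 * ε) ^ (B :: l).length * ‖F.starProjection v‖
        = (a - 2 * ε) * ((a - 2 * ε) ^ l.length * ‖F.starProjection v‖) := by
          rw [List.length_cons, pow_succ]; ring
      _ ≤ (a - 2 * ε) * ‖F.starProjection (l.prod v)‖ := by gcongr
      _ ≤ _ := hstep

theorem le_norm_list_prod_of_dominatesOn (hb : 0 ≤ b) (hab : b + 4 * ε ≤ a)
    {l : List (V ≃L[ℝ] V)} (hl : ∀ B ∈ l, ∃ G, DominatesOn G F a b ∧ ‖(B : V →L[ℝ] V) - G‖ ≤ ε)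
    {w : V} (hw : w ∈ F) :
    (a - 2 * ε) ^ l.length * ‖w‖ ≤ ‖l.prod w‖ := by
  have hcone : ‖Fᗮ.starProjection w‖ ≤ ‖F.starProjection w‖ := by
    rw [(Fᗮ.starProjection_apply_eq_zero_iff).2 (F.le_orthogonal_orthogonal hw)]
    simp
  have := (cone_step_list_prod hb hab l hl w hcone).1
  rw [starProjection_eq_self_iff.2 hw] at this
  exact this.trans (F.norm_starProjection_apply_le _)

end Cone

section Blocks

variable {ι V : Type*} [NormedAddCommGroup V] [InnerProductSpace ℝ V]

structure ScalesBlocks (E : ι → Submodule ℝ V) (G : V →L[ℝ] V) (c : ι → ℝ) (r : ℝ) : Prop where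
  mapsTo : ∀ i, ∀ v ∈ E i, G v ∈ E i
  le_norm : ∀ i, ∀ v ∈ E i, exp (c i - r) * ‖v‖ ≤ ‖G v‖
  norm_le : ∀ i, ∀ v ∈ E i, ‖G v‖ ≤ exp (c i + r) * ‖v‖

variable {E : ι → Submodule ℝ V} {c : ι → ℝ} {r : ℝ}

theorem ScalesBlocks.of_lt {G : V →L[ℝ] V} (hG : ∀ i, ∀ v ∈ E i, G v ∈ E i)
    (h : ∀ i, ∀ v ∈ E i, v ≠ 0 → exp (c i - r) * ‖v‖ < ‖G v‖ ∧ ‖G v‖ < exp (c i + r) * ‖v‖) :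
    ScalesBlocks E G c r := by
  refine ⟨hG, fun i v hv => ?_, fun i v hv => ?_⟩ <;> rcases eq_or_ne v 0 with rfl | hv0
  · simp
  · exact (h i v hv hv0).1.le
  · simp
  · exact (h i v hv hv0).2.le

theorem ScalesBlocks.symm [FiniteDimensional ℝ V] {e : V ≃L[ℝ] V}
    (h : ScalesBlocks E (e : V →L[ℝ] V) c r) : ScalesBlocks E (e.symm : V →L[ℝ] V) (-c) r := by
  have hsymm : ∀ i, ∀ v ∈ E i, e.symm v ∈ E i := fun i v hv => by
    have hmap : (E i).map (e : V →ₗ[ℝ] V) = E i :=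
      eq_of_le_of_finrank_eq (map_le_iff_le_comap.2 fun u hu => h.mapsTo i u hu)
        (e.toLinearEquiv.finrank_map_eq (E i))
    obtain ⟨u, hu, rfl⟩ := hmap.symm ▸ hv
    simpa using hu
  refine ⟨hsymm, fun i v hv => ?_, fun i v hv => ?_⟩
  · have := h.norm_le i _ (hsymm i v hv)
    simp only [ContinuousLinearEquiv.coe_coe, e.apply_symm_apply] at this
    rw [Pi.neg_apply, show -c i - r = -(c i + r) by ring, exp_neg, inv_mul_le_iff₀ (exp_pos _)]
    exact this
  · have := h.le_norm i _ (hsymm i v hv)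
    simp only [ContinuousLinearEquiv.coe_coe, e.apply_symm_apply] at this
    rw [Pi.neg_apply, show -c i + r = -(c i - r) by ring, exp_neg, ← div_eq_inv_mul,
      le_div_iff₀ (exp_pos _), mul_comm]
    exact this

variable (hE : OrthogonalFamily ℝ (fun i => E i) fun i => (E i).subtypeₗᵢ) (hspan : ⨆ i, E i = ⊤)
include hE hspan

theorem ScalesBlocks.opNorm_le [Fintype ι] {G : V →L[ℝ] V} (h : ScalesBlocks E G c r) {C : ℝ}
    (hC : ∀ i, c i ≤ C) : ‖G‖ ≤ exp (C + r) := by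
  refine G.opNorm_le_bound (exp_pos _).le fun x => hE.norm_map_le (s := univ)
    (fun i _ => h.mapsTo i) (exp_pos _).le (fun i _ v hv => (h.norm_le i v hv).trans ?_) ?_
  · gcongr; exact hC i
  · simp [hspan]

theorem ScalesBlocks.dominatesOn [Fintype ι] [DecidableEq ι]
    {G : V →L[ℝ] V} (h : ScalesBlocks E G c r) {s : Finset ι} {c₀ g : ℝ}
    (hs : ∀ i ∈ s, c₀ ≤ c i) (hsc : ∀ i ∉ s, c i ≤ c₀ - g) :
    DominatesOn G (⨆ i ∈ s, E i) (exp (c₀ - r)) (exp (c₀ - g + r)) := by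
  have hmaps (t : Finset ι) : ∀ x ∈ ⨆ i ∈ t, E i, G x ∈ ⨆ i ∈ t, E i := fun x hx =>
    (iSup₂_le fun i hi v hv => le_biSup E hi (h.mapsTo i v hv) :
      (⨆ i ∈ t, E i) ≤ (⨆ i ∈ t, E i).comap (G : V →ₗ[ℝ] V)) hx
  have hcompl := hE.orthogonal_iSup_eq hspan s
  refine ⟨hmaps s, hcompl ▸ hmaps sᶜ, ?_, hcompl ▸ ?_⟩
  · refine fun x => hE.le_norm_map (fun i _ => h.mapsTo i) (exp_pos _).le fun i hi v hv => ?_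
    refine le_trans ?_ (h.le_norm i v hv)
    gcongr
    linarith [hs i hi]
  · refine fun y => hE.norm_map_le (fun i _ => h.mapsTo i) (exp_pos _).le fun i hi v hv => ?_
    refine (h.norm_le i v hv).trans ?_
    gcongr
    linarith [hsc i (mem_compl.1 hi)]

end Blocks

theorem exists_finrank_iSup_Iio_le_lt {K V ι : Type*} [DivisionRing K] [AddCommGroup V]
    [Module K V] [LinearOrder ι] [Finite ι] [LocallyFiniteOrderBot ι]
    {E : ι → Submodule K V} (hspan : ⨆ j, E j = ⊤) {i : ℕ} (hi : i < finrank K V) :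
    ∃ t, finrank K (⨆ j ∈ Iio t, E j : Submodule K V) ≤ i ∧
      i < finrank K (⨆ j ∈ Iic t, E j : Submodule K V) := by
  classical
  have hne : ∃ t, i < finrank K (⨆ j ∈ Iic t, E j : Submodule K V) := by
    cases isEmpty_or_nonempty ι with
    | inl _ =>
      rw [iSup_of_empty] at hspan
      rw [← finrank_top, ← hspan, finrank_bot] at hi
      omega
    | inr _ =>
      obtain ⟨t, ht⟩ := Finite.exists_max (id : ι → ι)
      have htop : (⨆ j ∈ Iic t, E j : Submodule K V) = ⊤ :=
        eq_top_iff.2 <| hspan.ge.trans <| iSup_le fun j => le_biSup E (mem_Iic.2 (ht j))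
      exact ⟨t, by rwa [htop, finrank_top]⟩
  obtain ⟨t, ht, hmin⟩ :=
    wellFounded_lt.has_min {t | i < finrank K (⨆ j ∈ Iic t, E j : Submodule K V)} hne
  refine ⟨t, ?_, ht⟩
  rcases (Iio t).eq_empty_or_nonempty with h | h
  · rw [h, show (⨆ j ∈ (∅ : Finset ι), E j) = ⊥ by simp, finrank_bot]
    exact Nat.zero_le i
  · have hmax : (Iio t).max' h < t := mem_Iio.1 ((Iio t).max'_mem h)
    have hIio : Iio t = Iic ((Iio t).max' h) := by
      ext j
      exact ⟨fun hj => mem_Iic.2 ((Iio t).le_max' j hj),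
        fun hj => mem_Iio.2 ((mem_Iic.1 hj).trans_lt hmax)⟩
    rw [hIio]
    exact not_lt.1 fun hlt => hmin _ hlt hmax

theorem StrictAnti.two_mul_le_sub_of_mem_lowerBounds {k : ℕ} {lam : Fin k → ℝ}
    (hlam : StrictAnti lam) {κ : ℝ}
    (hκ : κ ∈ lowerBounds {x : ℝ | ∃ i j : Fin k, (j : ℕ) = (i : ℕ) + 1 ∧ x = (lam i - lam j) / 2})
    {i j : Fin k} (hij : i < j) :
    2 * κ ≤ lam i - lam j := by
  have hsucc : (i : ℕ) + 1 < k := lt_of_le_of_lt (Fin.lt_def.1 hij) j.isLt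
  have hκi := hκ ⟨i, ⟨i + 1, hsucc⟩, rfl, rfl⟩
  have := hlam.antitone (show (⟨i + 1, hsucc⟩ : Fin k) ≤ j from Fin.le_def.2 (Fin.lt_def.1 hij))
  linarith

def seqProd {G : Type*} [Monoid G] (C : ℕ → G) (n : ℕ) : G :=
  ((List.range n).map fun m => C (m + 1)).reverse.prod

theorem seqProd_succ {G : Type*} [Monoid G] (C : ℕ → G) (n : ℕ) :
    seqProd C (n + 1) = C (n + 1) * seqProd C n := by
  simp [seqProd, List.range_succ]

theorem seqProd_inv {G : Type*} [Group G] (C : ℕ → G) (n : ℕ) :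
    (seqProd C n)⁻¹ = ((List.range n).map fun m => (C (m + 1))⁻¹).prod := by
  rw [seqProd, List.prod_inv_reverse, List.map_reverse, List.reverse_reverse, List.map_map]
  rfl

theorem compSeq_eq_seqProd {d : ℕ} (C : ℕ → Euc d ≃L[ℝ] Euc d) (n : ℕ) :
    compSeq (fun m => (C m : Euc d →L[ℝ] Euc d)) n = seqProd C n := by
  induction n with
  | zero => rfl
  | succ n ih =>
    rw [compSeq, ih, seqProd_succ]
    rfl

theorem Submodule.exists_le_finrank_eq {K V : Type*} [DivisionRing K] [AddCommGroup V]
    [Module K V] (W : Submodule K V) {m : ℕ} (h : m ≤ finrank K W) :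
    ∃ U ≤ W, finrank K U = m := by
  obtain ⟨f, hf⟩ := exists_linearIndependent_of_le_finrank (R := K) (M := W) h
  refine ⟨(span K (Set.range f)).map W.subtype, map_subtype_le _ _, ?_⟩
  rw [finrank_map_subtype_eq, finrank_span_eq_card hf, Fintype.card_fin]

section SingularValues

variable {d : ℕ} (X : Euc d ≃L[ℝ] Euc d) {i : ℕ} {W : Submodule ℝ (Euc d)} {r : ℝ}

theorem le_sv_of_le_norm (hW : i < finrank ℝ W) (h : ∀ w ∈ W, r * ‖w‖ ≤ ‖X w‖) :
    r ≤ sv (X : Euc d →L[ℝ] Euc d) i := by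
  have hWd : finrank ℝ W ≤ d := by simpa using W.finrank_le
  refine le_csInf ?_ ?_
  · obtain ⟨V₀, -, hV₀⟩ := (⊤ : Submodule ℝ (Euc d)).exists_le_finrank_eq (m := d - i) (by simp)
    refine ⟨‖(X : Euc d →L[ℝ] Euc d)‖, V₀, hV₀, ?_⟩
    rintro _ ⟨⟨u, hu, rfl⟩, -⟩
    simpa using (X : Euc d →L[ℝ] Euc d).le_opNorm_of_le (mem_closedBall_zero_iff.1 hu)
  · rintro s ⟨V, hV, hVs⟩
    set U := V.map (X.symm.toLinearEquiv : Euc d →ₗ[ℝ] Euc d)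
    have hU : finrank ℝ U = d - i := by rw [LinearEquiv.finrank_map_eq, hV]
    have hUW : ¬ Disjoint U W := fun hdisj => by
      have := finrank_add_finrank_le_of_disjoint hdisj
      simp only [finrank_euclideanSpace_fin] at this
      omega
    obtain ⟨w, hwU, hwW, hw0⟩ : ∃ w ∈ U, w ∈ W ∧ w ≠ 0 := by
      simpa [disjoint_def] using hUW
    set w' := ‖w‖⁻¹ • w
    have hw' : ‖w'‖ = 1 := norm_smul_inv_norm hw0
    have hXw' : X w' ∈ V := by
      obtain ⟨v, hv, hvw⟩ := hwU
      simp [w', ← hvw, V.smul_mem _ hv]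
    calc r = r * ‖w'‖ := by rw [hw', mul_one]
      _ ≤ ‖X w'‖ := h w' (W.smul_mem _ hwW)
      _ ≤ s := hVs _ ⟨⟨w', by simp [hw'], rfl⟩, hXw'⟩

theorem sv_le_inv_of_le_norm_symm (hW : d - i ≤ finrank ℝ W) (hr : 0 < r)
    (h : ∀ w ∈ W, r * ‖w‖ ≤ ‖X.symm w‖) :
    sv (X : Euc d →L[ℝ] Euc d) i ≤ r⁻¹ := by
  obtain ⟨V, hVW, hV⟩ := W.exists_le_finrank_eq hW
  refine csInf_le ⟨0, ?_⟩ ⟨V, hV, ?_⟩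
  · rintro s ⟨V', -, hV's⟩
    simpa using hV's 0 ⟨⟨0, by simp, by simp⟩, V'.zero_mem⟩
  · rintro _ ⟨⟨u, hu, rfl⟩, hv⟩
    have := h _ (hVW hv)
    simp only [ContinuousLinearEquiv.coe_coe, ContinuousLinearEquiv.symm_apply_apply] at this
    rw [← mul_one r⁻¹, le_inv_mul_iff₀ hr]
    exact this.trans (mem_closedBall_zero_iff.1 hu)

end SingularValues

theorem abs_inv_mul_log_sub_le {n : ℕ} (hn : 0 < n) {x c r : ℝ} (hlo : exp (n * (c - r)) ≤ x)
    (hhi : x ≤ exp (n * (c + r))) :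
    |1 / n * log x - c| ≤ r := by
  have hx : 0 < x := (exp_pos _).trans_le hlo
  have h₁ : n * (c - r) ≤ log x := (le_log_iff_exp_le hx).2 hlo
  have h₂ : log x ≤ n * (c + r) := (log_le_iff_le_exp hx).2 hhi
  have hn' : (0 : ℝ) < n := by exact_mod_cast hn
  rw [show 1 / n * log x - c = (log x - n * c) / n by field_simp, abs_div, abs_of_pos hn',
    div_le_iff₀ hn', abs_le]
  constructor <;> linarith

/-- With `M = exp (Λ + δ / 4)` bounding `‖A_n⁻¹‖` and `ε = (1 - exp (-(δ / 8))) / (4 M)` small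
enough for the cone argument in every block, a perturbation of `A_n` of size `ε / (2 M²)` moves
both `A_n` and `A_n⁻¹` by at most `ε`. -/
def perturbationRadius (Λ δ : ℝ) : ℝ :=
  (1 - exp (-(δ / 8))) / (8 * exp (Λ + δ / 4) ^ 3)

theorem perturbationRadius_pos (Λ : ℝ) {δ : ℝ} (hδ : 0 < δ) : 0 < perturbationRadius Λ δ := by
  have : exp (-(δ / 8)) < 1 := exp_lt_one_iff.2 (by linarith)
  exact div_pos (by linarith) (by positivity)

section Products

variable {d k : ℕ} {E : Fin k → Submodule ℝ (Euc d)}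
  (hE : OrthogonalFamily ℝ (fun i => E i) fun i => (E i).subtypeₗᵢ) (hspan : ⨆ i, E i = ⊤)
  {lam : Fin k → ℝ} (hlam : Antitone lam) {δ : ℝ} (hδ : 0 ≤ δ)
  (hgap : ∀ i j, i < j → δ ≤ lam i - lam j)
  {A D : ℕ → Euc d ≃L[ℝ] Euc d} (hA : ∀ m, ScalesBlocks E (A m : Euc d →L[ℝ] Euc d) lam (δ / 4))
  {ε : ℝ}
include hE hspan hlam hδ hgap hA

theorem exp_le_sv_compSeq (hε : ∀ j, 4 * ε ≤ exp (lam j - δ / 4) - exp (lam j - 3 * δ / 8))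
    (hD : ∀ m, ‖(D m : Euc d →L[ℝ] Euc d) - A m‖ ≤ ε) (n : ℕ) {i : ℕ} {t : Fin k}
    (hi : i < finrank ℝ (⨆ j ∈ Iic t, E j : Submodule ℝ (Euc d))) :
    exp (n * (lam t - 3 * δ / 8)) ≤ sv (compSeq (fun m => (D m : Euc d →L[ℝ] Euc d)) n) i := by
  have hε₀ : 0 ≤ ε := (norm_nonneg _).trans (hD 0)
  have hdom (m : ℕ) := (hA m).dominatesOn hE hspan (s := Iic t) (c₀ := lam t) (g := δ)
    (fun j hj => hlam (mem_Iic.1 hj)) (fun j hj => by linarith [hgap t j (by simpa using hj)])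
  have hab : exp (lam t - δ + δ / 4) + 4 * ε ≤ exp (lam t - δ / 4) := by
    have : exp (lam t - δ + δ / 4) ≤ exp (lam t - 3 * δ / 8) := exp_le_exp.2 (by linarith)
    linarith [hε t]
  set l := ((List.range n).map fun m => D (m + 1)).reverse
  have hl : ∀ B ∈ l, ∃ G, DominatesOn G (⨆ j ∈ Iic t, E j) (exp (lam t - δ / 4))
      (exp (lam t - δ + δ / 4)) ∧ ‖(B : Euc d →L[ℝ] Euc d) - G‖ ≤ ε := by
    intro B hB
    obtain ⟨m, -, rfl⟩ := List.mem_map.1 (List.mem_reverse.1 hB)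
    exact ⟨_, hdom (m + 1), hD (m + 1)⟩
  rw [compSeq_eq_seqProd]
  refine le_sv_of_le_norm _ hi fun w hw => ?_
  have := le_norm_list_prod_of_dominatesOn (exp_pos _).le hab hl hw
  calc exp (n * (lam t - 3 * δ / 8)) * ‖w‖ = exp (lam t - 3 * δ / 8) ^ n * ‖w‖ := by
        rw [exp_nat_mul]
    _ ≤ (exp (lam t - δ / 4) - 2 * ε) ^ n * ‖w‖ := by
        gcongr
        linarith [hε t]
    _ ≤ ‖seqProd D n w‖ := by simpa [l, seqProd] using this

theorem sv_compSeq_le_exp (hε : ∀ j, 4 * ε ≤ exp (-lam j - δ / 4) - exp (-lam j - 3 * δ / 8))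
    (hD : ∀ m, ‖((D m).symm : Euc d →L[ℝ] Euc d) - (A m).symm‖ ≤ ε) (n : ℕ) {i : ℕ} {t : Fin k}
    (hi : finrank ℝ (⨆ j ∈ Iio t, E j : Submodule ℝ (Euc d)) ≤ i) :
    sv (compSeq (fun m => (D m : Euc d →L[ℝ] Euc d)) n) i ≤ exp (n * (lam t + 3 * δ / 8)) := by
  have hε₀ : 0 ≤ ε := (norm_nonneg _).trans (hD 0)
  have hdom (m : ℕ) := ((hA m).symm).dominatesOn hE hspan (s := (Iio t)ᶜ) (c₀ := -lam t)
    (g := δ) (fun j hj => by simpa using hlam (not_lt.1 (by simpa using hj)))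
    (fun j hj => by simp only [Pi.neg_apply]; linarith [hgap j t (by simpa using hj)])
  have hab : exp (-lam t - δ + δ / 4) + 4 * ε ≤ exp (-lam t - δ / 4) := by
    have : exp (-lam t - δ + δ / 4) ≤ exp (-lam t - 3 * δ / 8) := exp_le_exp.2 (by linarith)
    linarith [hε t]
  set l := (List.range n).map fun m => (D (m + 1))⁻¹
  have hl : ∀ B ∈ l, ∃ G, DominatesOn G (⨆ j ∈ (Iio t)ᶜ, E j) (exp (-lam t - δ / 4))
      (exp (-lam t - δ + δ / 4)) ∧ ‖(B : Euc d →L[ℝ] Euc d) - G‖ ≤ ε := by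
    intro B hB
    obtain ⟨m, -, rfl⟩ := List.mem_map.1 hB
    exact ⟨_, hdom (m + 1), hD (m + 1)⟩
  have hrank : d - i ≤ finrank ℝ (⨆ j ∈ (Iio t)ᶜ, E j : Submodule ℝ (Euc d)) := by
    have := (⨆ j ∈ Iio t, E j : Submodule ℝ (Euc d)).finrank_add_finrank_orthogonal
    rw [hE.orthogonal_iSup_eq hspan, finrank_euclideanSpace_fin] at this
    omega
  rw [compSeq_eq_seqProd, show exp (n * (lam t + 3 * δ / 8)) =
    (exp (n * (-lam t - 3 * δ / 8)))⁻¹ by rw [← exp_neg]; ring_nf]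
  refine sv_le_inv_of_le_norm_symm _ hrank (exp_pos _) fun w hw => ?_
  have := le_norm_list_prod_of_dominatesOn (exp_pos _).le hab hl hw
  calc exp (n * (-lam t - 3 * δ / 8)) * ‖w‖ = exp (-lam t - 3 * δ / 8) ^ n * ‖w‖ := by
        rw [exp_nat_mul]
    _ ≤ (exp (-lam t - δ / 4) - 2 * ε) ^ n * ‖w‖ := by
        gcongr
        linarith [hε t]
    _ ≤ ‖(seqProd D n)⁻¹ w‖ := by simpa [l, seqProd_inv] using this

theorem abs_log_sv_compSeq_sub_le {Λ : ℝ} (hΛ : ∀ j, |lam j| ≤ Λ)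
    (hAD : ∀ m, ‖(A m : Euc d →L[ℝ] Euc d) - D m‖ ≤ perturbationRadius Λ δ) {n : ℕ} (hn : 0 < n)
    {i : ℕ} {t : Fin k} (ht₁ : finrank ℝ (⨆ j ∈ Iio t, E j : Submodule ℝ (Euc d)) ≤ i)
    (ht₂ : i < finrank ℝ (⨆ j ∈ Iic t, E j : Submodule ℝ (Euc d))) :
    |1 / n * log (sv (compSeq (fun m => (D m : Euc d →L[ℝ] Euc d)) n) i) - lam t| ≤ 3 * δ / 8 := by
  obtain ⟨M, hM⟩ : ∃ M, exp (Λ + δ / 4) = M := ⟨_, rfl⟩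
  obtain ⟨η, hη⟩ : ∃ η, exp (-(δ / 8)) = η := ⟨_, rfl⟩
  have hM₁ : 1 ≤ M := hM ▸ one_le_exp (by linarith [abs_nonneg (lam t), hΛ t])
  have hη₁ : η ≤ 1 := hη ▸ exp_le_one_iff.2 (by linarith)
  obtain ⟨ε, hε⟩ : ∃ ε, (1 - η) / (4 * M) = ε := ⟨_, rfl⟩
  have hε₀ : 0 ≤ ε := hε ▸ div_nonneg (by linarith) (by positivity)
  have hε₁ : ε ≤ M := by
    rw [← hε, div_le_iff₀ (by positivity)]
    nlinarith [hη ▸ exp_pos (-(δ / 8))]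
  have hsmall (c : ℝ) (hc : -Λ ≤ c) : 4 * ε ≤ exp (c - δ / 4) - exp (c - 3 * δ / 8) := by
    rw [show c - 3 * δ / 8 = (c - δ / 4) + -(δ / 8) by ring, exp_add, hη]
    have : M⁻¹ ≤ exp (c - δ / 4) := by rw [← hM, ← exp_neg]; exact exp_le_exp.2 (by linarith)
    calc 4 * ε = (1 - η) * M⁻¹ := by rw [← hε]; field_simp
      _ ≤ (1 - η) * exp (c - δ / 4) := by gcongr
      _ = _ := by ring
  have hradius : perturbationRadius Λ δ = ε / (2 * M ^ 2) := by
    rw [perturbationRadius, hM, hη, ← hε]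
    field_simp
    ring
  have hD (m : ℕ) : ‖(D m : Euc d →L[ℝ] Euc d) - A m‖ ≤ ε := by
    rw [norm_sub_rev]
    refine (hAD m).trans ?_
    rw [hradius]
    exact div_le_self hε₀ (by nlinarith)
  have hD' (m : ℕ) : ‖((D m).symm : Euc d →L[ℝ] Euc d) - (A m).symm‖ ≤ ε := by
    have hAinv := (hA m).symm.opNorm_le hE hspan (C := Λ) fun j =>
      neg_le.1 (neg_le_of_abs_le (hΛ j))
    rw [hM] at hAinv
    refine (ContinuousLinearEquiv.norm_symm_sub_symm_le hAinv (hAD m) ?_).trans_eq ?_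
    · rw [hradius, show 2 * M * (ε / (2 * M ^ 2)) = ε / M by field_simp]
      exact (div_le_one (by positivity)).2 hε₁
    · rw [hradius]
      field_simp
  exact abs_inv_mul_log_sub_le hn
    (exp_le_sv_compSeq hE hspan hlam hδ hgap hA
      (fun j => hsmall _ (neg_le_of_abs_le (hΛ j))) hD n ht₂)
    (sv_compSeq_le_exp hE hspan hlam hδ hgap hA
      (fun j => hsmall _ (neg_le_neg (le_of_abs_le (hΛ j)))) hD' n ht₁)

end Products

theorem singular_values_of_perturbed_products {d k : ℕ}
    (E : Fin k → Submodule ℝ (Euc d))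
    (horth : ∀ i j : Fin k, i ≠ j → ∀ v ∈ E i, ∀ w ∈ E j, (inner ℝ v w : ℝ) = 0)
    (hspan : (⨆ i, E i) = ⊤)
    (lam : Fin k → ℝ) (hlam : StrictAnti lam) (κ δ : ℝ)
    (hκ : IsLeast {x : ℝ | ∃ i j : Fin k, (j : ℕ) = (i : ℕ) + 1 ∧ x = (lam i - lam j) / 2} κ)
    (hδ : 0 < δ) (hδκ : δ < κ / 2) :
    ∃ γ : ℝ, 0 < γ ∧ ∃ α₁ : ℝ, 0 < α₁ ∧
      ∀ A C : ℕ → (Euc d ≃L[ℝ] Euc d),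
        (∀ n : ℕ, ∀ i : Fin k, ∀ v ∈ E i, A n v ∈ E i) →
        (∀ n : ℕ, ∀ i : Fin k, ∀ v ∈ E i, v ≠ 0 →
          Real.exp (lam i - δ / 4) * ‖v‖ < ‖A n v‖ ∧
          ‖A n v‖ < Real.exp (lam i + δ / 4) * ‖v‖) →
        (∀ n : ℕ, ‖((A n : Euc d →L[ℝ] Euc d)) - ((C n : Euc d →L[ℝ] Euc d))‖ < α₁) →
        ∀ n : ℕ, 1 ≤ n → ∀ i : Fin d,
          |(1 / (n : ℝ)) * Real.log (sv (compSeq (fun m => (A m : Euc d →L[ℝ] Euc d)) n) i) -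
            (1 / (n : ℝ)) * Real.log (sv (compSeq (fun m => (C m : Euc d →L[ℝ] Euc d)) n) i)|
            < δ := by
  have hE : OrthogonalFamily ℝ (fun i => E i) fun i => (E i).subtypeₗᵢ :=
    OrthogonalFamily.of_pairwise fun i j hij => isOrtho_iff_inner_eq.2 (horth i j hij)
  have hgap (i j : Fin k) (hij : i < j) : δ ≤ lam i - lam j := by
    linarith [hlam.two_mul_le_sub_of_mem_lowerBounds hκ.2 hij]
  set Λ := ∑ j, |lam j|
  have hΛ (j : Fin k) : |lam j| ≤ Λ := single_le_sum (fun j _ => abs_nonneg (lam j)) (mem_univ j)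
  refine ⟨1, one_pos, perturbationRadius Λ δ, perturbationRadius_pos Λ hδ, ?_⟩
  intro A C hAE hA hAC n hn i
  have hAs (m : ℕ) : ScalesBlocks E (A m : Euc d →L[ℝ] Euc d) lam (δ / 4) :=
    ScalesBlocks.of_lt (hAE m) (hA m)
  obtain ⟨t, ht₁, ht₂⟩ := exists_finrank_iSup_Iio_le_lt hspan (i := i) (by simp)
  have hA' := abs_le.1 <| abs_log_sv_compSeq_sub_le hE hspan hlam.antitone hδ.le hgap hAs hΛ
    (D := A) (fun m => by simpa using (perturbationRadius_pos Λ hδ).le) hn ht₁ ht₂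
  have hC' := abs_le.1 <| abs_log_sv_compSeq_sub_le hE hspan hlam.antitone hδ.le hgap hAs hΛ
    (D := C) (fun m => (hAC m).le) hn ht₁ ht₂
  rw [abs_lt]
  constructor <;> linarith
end
end

section
/- Let (C_n) be a sequence in GL(d,ℝ), γ > 0, and suppose each C_n maps the closed cone closure(K_{k−1,γ}) = {v : ‖∑_{i≤k−1} v^i‖ ≤ γ·‖∑_{i≥k} v^i‖} into itself in the sense that C_n⁻¹(K_{k−1,γ}) ⊂ K_{k−1,γ·e^{−κ+δ/2}} for some κ > δ/2 > 0. Then H_k := ⋂_{n≥1} (C^{(n)})⁻¹(closure(K_{k−1,γ})), where C^{(n)} = C_n ··· C_1, is a linear subspace of ℝ^d. -/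
noncomputable section

/-- Open cone `K_{j,γ}`. -/
def coneL {d k : ℕ} (E : Fin k → Submodule ℝ (Euc d)) (j : ℕ) (γ : ℝ) : Set (Euc d) :=
  {v | ‖projS (Vlow E j) v‖ < γ * ‖v - projS (Vlow E j) v‖}

/-- Closed cone `closure(K_{j,γ})`. -/
def coneLc {d k : ℕ} (E : Fin k → Submodule ℝ (Euc d)) (j : ℕ) (γ : ℝ) : Set (Euc d) :=
  {v | ‖projS (Vlow E j) v‖ ≤ γ * ‖v - projS (Vlow E j) v‖}

/-!
Write `P` for the orthogonal projection onto `K = E¹ ⊕ ⋯ ⊕ Eᵏ⁻¹`, `Q = 1 - P`,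
`T_n = C_n ⋯ C_1` and `γ' = γ e^{-κ+δ/2} < γ`. By continuity `C_n⁻¹` maps the closed `γ`-cone into
the closed `γ'`-cone, so `H` is the set of `v` with `T_n v` in the closed `γ`-cone for every
`n ≥ 0`, and then `T_n v` even lies in the `γ'`-cone.

`H` contains the range of a linear map that is the identity modulo `K`: the subspaces `T_n⁻¹ Kᗮ`
are complements of `K` whose points stay in the cone up to time `n`, and a limit point of the
(uniformly bounded) projections onto them along `K` does the job.

`Q` is injective on `H`: let `v, v' ∈ H` with `w = v - v' ∈ K`. Since `T_m w` stays outside the open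
cone, `g_m(t) = γ²‖Q T_m(v' + t w)‖² - ‖P T_m(v' + t w)‖²` is a concave quadratic in `t`, and
`v' + t w ∈ H` iff `g_m(t) ≥ 0` for all `m`. Two points of the thinner `γ'`-cone are at bounded
Hilbert distance in the `γ`-cone, uniformly in `m`, so this set of `t` has no finite lower end;
as `H` is a closed cone this puts `w` in `H ∩ K = 0`.
-/

open Set Filter Topology

namespace InvariantCone

variable {E : Type*} [NormedAddCommGroup E] [InnerProductSpace ℝ E]

section Cone

variable (K : Submodule ℝ E) [K.HasOrthogonalProjection]

def openCone (γ : ℝ) : Set E :=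
  {v | ‖K.starProjection v‖ < γ * ‖v - K.starProjection v‖}

def closedCone (γ : ℝ) : Set E :=
  {v | ‖K.starProjection v‖ ≤ γ * ‖v - K.starProjection v‖}

def coneForm (γ : ℝ) (x y : E) : ℝ :=
  γ ^ 2 * inner ℝ (x - K.starProjection x) (y - K.starProjection y)
    - inner ℝ (K.starProjection x) (K.starProjection y)

variable {K} {γ γ' γ₁ γ₂ : ℝ} {u v x y : E}

lemma openCone_mono (h : γ₁ ≤ γ₂) : openCone K γ₁ ⊆ openCone K γ₂ :=
  fun _ hv => hv.trans_le (mul_le_mul_of_nonneg_right h (norm_nonneg _))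

lemma closedCone_mono (h : γ₁ ≤ γ₂) : closedCone K γ₁ ⊆ closedCone K γ₂ :=
  fun _ hv => hv.trans (mul_le_mul_of_nonneg_right h (norm_nonneg _))

lemma openCone_subset_closedCone : openCone K γ ⊆ closedCone K γ :=
  fun _ hv => LT.lt.le (α := ℝ) hv

lemma isClosed_closedCone : IsClosed (closedCone K γ) :=
  isClosed_le (by fun_prop) (by fun_prop)

lemma zero_mem_closedCone : (0 : E) ∈ closedCone K γ := by
  simp [closedCone]

lemma smul_mem_closedCone (hv : v ∈ closedCone K γ) (c : ℝ) : c • v ∈ closedCone K γ := by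
  have h := mul_le_mul_of_nonneg_left hv (norm_nonneg c)
  simp only [closedCone, mem_ofPred_eq, map_smul, ← smul_sub, norm_smul] at h ⊢
  linarith

lemma mem_closedCone_of_mem_orthogonal (hγ : 0 ≤ γ) (hv : v ∈ Kᗮ) : v ∈ closedCone K γ := by
  simp only [closedCone, mem_ofPred_eq, K.starProjection_apply_eq_zero_iff.mpr hv, norm_zero]
  positivity

lemma notMem_openCone_of_mem (hv : v ∈ K) : v ∉ openCone K γ := by
  simp [openCone, K.starProjection_eq_self_iff.mpr hv]

lemma eq_zero_of_mem_closedCone (hv : v ∈ closedCone K γ) (hQ : v - K.starProjection v = 0) :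
    v = 0 := by
  have hP : K.starProjection v = 0 := by
    simpa [closedCone, hQ] using hv
  rwa [hP, sub_zero] at hQ

lemma eq_zero_of_mem_closedCone_of_mem (hv : v ∈ closedCone K γ) (hK : v ∈ K) : v = 0 :=
  eq_zero_of_mem_closedCone hv (by rw [K.starProjection_eq_self_iff.mpr hK, sub_self])

lemma norm_le_of_mem_closedCone (hv : v ∈ closedCone K γ) :
    ‖v‖ ≤ (1 + γ) * ‖v - K.starProjection v‖ :=
  calc ‖v‖ = ‖(v - K.starProjection v) + K.starProjection v‖ := by rw [sub_add_cancel]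
    _ ≤ ‖v - K.starProjection v‖ + γ * ‖v - K.starProjection v‖ := norm_add_le_of_le le_rfl hv
    _ = (1 + γ) * ‖v - K.starProjection v‖ := by ring

lemma mem_closure_openCone (hγ : 0 < γ) (hu : u ∈ closedCone K γ)
    (hQ : u - K.starProjection u ≠ 0) : u ∈ closure (openCone K γ) := by
  set p := K.starProjection u
  have hPp : K.starProjection p = p :=
    K.starProjection_eq_self_iff.mpr (K.starProjection_apply_mem u)
  have hpath : ∀ t ∈ Ioo (0 : ℝ) 1, u - t • p ∈ openCone K γ := by
    rintro t ⟨ht0, ht1⟩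
    have hu' : ‖p‖ ≤ γ * ‖u - p‖ := hu
    have hQpos : 0 < γ * ‖u - p‖ := mul_pos hγ (norm_pos_iff.mpr hQ)
    have hP : K.starProjection (u - t • p) = (1 - t) • p := by
      rw [map_sub, map_smul, hPp, sub_smul, one_smul]
    show ‖K.starProjection (u - t • p)‖ < γ * ‖u - t • p - K.starProjection (u - t • p)‖
    rw [hP, norm_smul, Real.norm_of_nonneg (by linarith), show u - t • p - (1 - t) • p = u - p by
      module]
    nlinarith
  have htend : Tendsto (fun t : ℝ => u - t • p) (𝓝[>] 0) (𝓝 u) := by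
    have : Tendsto (fun t : ℝ => u - t • p) (𝓝 0) (𝓝 (u - (0 : ℝ) • p)) :=
      (by fun_prop : Continuous fun t : ℝ => u - t • p).tendsto 0
    rw [zero_smul, sub_zero] at this
    exact this.mono_left nhdsWithin_le_nhds
  exact mem_closure_of_tendsto htend (mem_of_superset (Ioo_mem_nhdsGT zero_lt_one) hpath)

lemma mapsTo_closedCone (hγ : 0 < γ) {A : E →L[ℝ] E}
    (hA : MapsTo A (openCone K γ) (openCone K γ')) :
    MapsTo A (closedCone K γ) (closedCone K γ') := by
  intro u hu
  by_cases hQ : u - K.starProjection u = 0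
  · rw [eq_zero_of_mem_closedCone hu hQ, map_zero]
    exact zero_mem_closedCone
  · exact closure_minimal openCone_subset_closedCone isClosed_closedCone
      (map_mem_closure A.continuous (mem_closure_openCone hγ hu hQ) hA)

lemma coneForm_self (v : E) :
    coneForm K γ v v = γ ^ 2 * ‖v - K.starProjection v‖ ^ 2 - ‖K.starProjection v‖ ^ 2 := by
  simp only [coneForm, real_inner_self_eq_norm_sq]

lemma mem_closedCone_iff_coneForm_nonneg (hγ : 0 ≤ γ) :
    v ∈ closedCone K γ ↔ 0 ≤ coneForm K γ v v := by
  rw [coneForm_self, sub_nonneg, ← mul_pow,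
    sq_le_sq₀ (norm_nonneg _) (mul_nonneg hγ (norm_nonneg _))]
  rfl

lemma notMem_openCone_iff_coneForm_nonpos (hγ : 0 ≤ γ) :
    v ∉ openCone K γ ↔ coneForm K γ v v ≤ 0 := by
  rw [coneForm_self, sub_nonpos, ← mul_pow,
    sq_le_sq₀ (mul_nonneg hγ (norm_nonneg _)) (norm_nonneg _)]
  exact not_lt (α := ℝ)

lemma coneForm_add_smul (x z : E) (s t : ℝ) :
    coneForm K γ (x + s • z) (x + t • z) =
      coneForm K γ x x + coneForm K γ x z * (s + t) + coneForm K γ z z * (s * t) := by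
  have hQ : ∀ r : ℝ, x + r • z - K.starProjection (x + r • z)
      = (x - K.starProjection x) + r • (z - K.starProjection z) := fun r => by
    rw [map_add, map_smul]; module
  rw [coneForm, hQ, hQ]
  simp only [coneForm, map_add, map_smul, inner_add_left, inner_add_right,
    real_inner_smul_left, real_inner_smul_right, real_inner_comm (x - K.starProjection x),
    real_inner_comm (K.starProjection x)]
  ring

lemma sq_sub_sq_mul_le_coneForm (hx : x ∈ closedCone K γ') :
    (γ ^ 2 - γ' ^ 2) * ‖x - K.starProjection x‖ ^ 2 ≤ coneForm K γ x x := by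
  have hx' : ‖K.starProjection x‖ ≤ γ' * ‖x - K.starProjection x‖ := hx
  rw [coneForm_self]
  nlinarith [norm_nonneg (K.starProjection x)]

lemma abs_coneForm_le (hγ' : 0 ≤ γ') (hx : x ∈ closedCone K γ') (hy : y ∈ closedCone K γ') :
    |coneForm K γ x y| ≤
      (γ ^ 2 + γ' ^ 2) * (‖x - K.starProjection x‖ * ‖y - K.starProjection y‖) := by
  have hx' : ‖K.starProjection x‖ ≤ γ' * ‖x - K.starProjection x‖ := hx
  have hy' : ‖K.starProjection y‖ ≤ γ' * ‖y - K.starProjection y‖ := hy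
  have hQ := abs_real_inner_le_norm (x - K.starProjection x) (y - K.starProjection y)
  have hP := abs_real_inner_le_norm (K.starProjection x) (K.starProjection y)
  have hPP : ‖K.starProjection x‖ * ‖K.starProjection y‖ ≤
      γ' * ‖x - K.starProjection x‖ * (γ' * ‖y - K.starProjection y‖) :=
    mul_le_mul hx' hy' (norm_nonneg _) (by positivity)
  calc |coneForm K γ x y|
      ≤ γ ^ 2 * |inner ℝ (x - K.starProjection x) (y - K.starProjection y)|
          + |inner ℝ (K.starProjection x) (K.starProjection y)| := by
        rw [coneForm, ← abs_of_nonneg (sq_nonneg γ), ← abs_mul, abs_of_nonneg (sq_nonneg γ)]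
        exact abs_sub _ _
    _ ≤ _ := by nlinarith [sq_nonneg γ]

lemma coneForm_sq_le (hγ' : 0 ≤ γ') (hγ'γ : γ' < γ) (hx : x ∈ closedCone K γ')
    (hy : y ∈ closedCone K γ') :
    coneForm K γ x y ^ 2 ≤
      ((γ ^ 2 + γ' ^ 2) / (γ ^ 2 - γ' ^ 2)) ^ 2 * coneForm K γ x x * coneForm K γ y y := by
  have hD : 0 < γ ^ 2 - γ' ^ 2 := by nlinarith
  set a := ‖x - K.starProjection x‖
  set b := ‖y - K.starProjection y‖
  have hxx := sq_sub_sq_mul_le_coneForm (γ := γ) hx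
  have hyy := sq_sub_sq_mul_le_coneForm (γ := γ) hy
  have hxy := abs_le.mp (abs_coneForm_le (γ := γ) hγ' hx hy)
  calc coneForm K γ x y ^ 2 ≤ ((γ ^ 2 + γ' ^ 2) * (a * b)) ^ 2 := sq_le_sq' hxy.1 hxy.2
    _ = ((γ ^ 2 + γ' ^ 2) / (γ ^ 2 - γ' ^ 2)) ^ 2 * ((γ ^ 2 - γ' ^ 2) * a ^ 2)
          * ((γ ^ 2 - γ' ^ 2) * b ^ 2) := by field_simp
    _ ≤ _ := by
        have hxx0 : 0 ≤ coneForm K γ x x := (mul_nonneg hD.le (sq_nonneg a)).trans hxx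
        gcongr

lemma coneForm_self_pos (hγ' : 0 ≤ γ') (hγ'γ : γ' < γ) (hx : x ∈ closedCone K γ')
    (hx0 : x ≠ 0) : 0 < coneForm K γ x x := by
  have hQ : x - K.starProjection x ≠ 0 := fun h => hx0 (eq_zero_of_mem_closedCone hx h)
  have hD : 0 < γ ^ 2 - γ' ^ 2 := by nlinarith
  exact (mul_pos hD (pow_pos (norm_pos_iff.mpr hQ) 2)).trans_le (sq_sub_sq_mul_le_coneForm hx)

end Cone

section Quadratic

/- `q` is the polarization of a concave quadratic with a root in `[p, s]`; the bound on
`q s t ^ 2 / (q s s * q t t)` bounds the Hilbert distance from `s` to `t` inside its positivity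
interval, so `s` stays away from that root. -/
lemma sq_sub_le_of_cross_bound {q : ℝ → ℝ → ℝ} {a b c M p s t : ℝ}
    (hq : ∀ s t, q s t = a + b * (s + t) + c * (s * t)) (hc : c ≤ 0) (hM : 1 ≤ M)
    (hps : p < s) (hst : s < t) (hp : q p p < 0) (hs : 0 < q s s) (ht : 0 < q t t)
    (hcross : q s t ^ 2 ≤ M * q s s * q t t) :
    (t - s) ^ 2 ≤ 4 * (M - 1) * (s - p) * (t - p) := by
  have hcont : ContinuousOn (fun r => q r r) (Icc p s) := by
    simp only [hq]; fun_prop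
  obtain ⟨r, ⟨hpr, hrs⟩, hr⟩ := intermediate_value_Icc hps.le hcont ⟨hp.le, hs.le⟩
  have hrs : r < s := hrs.lt_of_ne (by rintro rfl; exact hs.ne' hr)
  set β := b + c * r
  have hq' : ∀ u v, q u v = β * ((u - r) + (v - r)) + c * ((u - r) * (v - r)) := by
    intro u v
    have : a = -(2 * b * r + c * r ^ 2) := by linarith [hq r r]
    rw [hq, this]; ring
  have hss : q s s = 2 * β * (s - r) + c * (s - r) ^ 2 := by rw [hq']; ring
  have htt : q t t = 2 * β * (t - r) + c * (t - r) ^ 2 := by rw [hq']; ring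
  have hdisc : q s t ^ 2 - q s s * q t t = β ^ 2 * (t - s) ^ 2 := by rw [hq', hq', hq']; ring
  have hβ : 0 < β := by nlinarith
  have hss' : q s s ≤ 2 * β * (s - r) := by nlinarith
  have htt' : q t t ≤ 2 * β * (t - r) := by nlinarith
  have key : β ^ 2 * (t - s) ^ 2 ≤ β ^ 2 * (4 * (M - 1) * ((s - r) * (t - r))) :=
    calc β ^ 2 * (t - s) ^ 2 = q s t ^ 2 - q s s * q t t := hdisc.symm
      _ ≤ (M - 1) * (q s s * q t t) := by linarith
      _ ≤ (M - 1) * (2 * β * (s - r) * (2 * β * (t - r))) := by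
        gcongr
      _ = β ^ 2 * (4 * (M - 1) * ((s - r) * (t - r))) := by ring
  calc (t - s) ^ 2 ≤ 4 * (M - 1) * ((s - r) * (t - r)) := le_of_mul_le_mul_left key (by positivity)
    _ ≤ 4 * (M - 1) * (s - p) * (t - p) := by
      rw [mul_assoc _ (s - p)]
      gcongr
      · linarith

lemma not_bddBelow_of_sq_sub_le {J : Set ℝ} {L : ℝ} (hJ : IsClosed J) (h0 : 0 ∈ J)
    (h : ∀ s ∈ J, s < 1 → ∀ p < s, p ∉ J → (1 - s) ^ 2 ≤ L * (s - p) * (1 - p)) :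
    ¬ BddBelow J := by
  intro hbdd
  set α := sInf J
  have hαJ : α ∈ J := hJ.csInf_mem ⟨0, h0⟩ hbdd
  have hα0 : α ≤ 0 := csInf_le hbdd h0
  have hlim : Tendsto (fun p => L * (α - p) * (1 - p)) (𝓝[<] α) (𝓝 0) := by
    have := ((by fun_prop : Continuous fun p => L * (α - p) * (1 - p)).tendsto α)
    simpa using this.mono_left nhdsWithin_le_nhds
  obtain ⟨p, hp, hpα⟩ :=
    ((hlim.eventually_lt_const (pow_pos (by linarith) 2 : (0 : ℝ) < (1 - α) ^ 2)).and
      self_mem_nhdsWithin).exists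
  have hpJ : p ∉ J := fun hpJ => (csInf_le hbdd hpJ).not_gt hpα
  exact (h α hαJ (by linarith) p hpα hpJ).not_gt hp

end Quadratic

lemma mem_of_not_bddBelow_setOf_add_smul_mem {S : Set E} (hS : IsClosed S)
    (hsmul : ∀ (c : ℝ), ∀ x ∈ S, c • x ∈ S) {x w : E} (h : ¬ BddBelow {t : ℝ | x + t • w ∈ S}) :
    w ∈ S := by
  have hfreq : ∃ᶠ t : ℝ in atBot, x + t • w ∈ S := by
    rw [frequently_atBot]
    intro a
    obtain ⟨t, ht, hta⟩ := not_bddBelow_iff.mp h a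
    exact ⟨t, hta.le, ht⟩
  have htend : Tendsto (fun t : ℝ => t⁻¹ • x + w) atBot (𝓝 w) := by
    simpa using ((tendsto_inv_atBot_zero (𝕜 := ℝ)).smul_const x).add_const w
  refine hS.mem_of_frequently_of_tendsto ?_ htend
  refine (hfreq.and_eventually (eventually_lt_atBot 0)).mono fun t ⟨ht, ht0⟩ => ?_
  have := hsmul t⁻¹ _ ht
  rwa [smul_add, smul_smul, inv_mul_cancel₀ ht0.ne, one_smul] at this

section Dynamics

variable {K : Submodule ℝ E} [K.HasOrthogonalProjection] {γ γ' : ℝ} {C : ℕ → E ≃L[ℝ] E}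
  {m n : ℕ} {v v' w : E}

def orbitMap (C : ℕ → E ≃L[ℝ] E) : ℕ → E ≃L[ℝ] E
  | 0 => ContinuousLinearEquiv.refl ℝ E
  | n + 1 => (orbitMap C n).trans (C (n + 1))

@[simp]
lemma orbitMap_succ_apply (n : ℕ) (v : E) : orbitMap C (n + 1) v = C (n + 1) (orbitMap C n v) :=
  rfl

variable (K γ C) in
def stableSet : Set E := {v | ∀ n, orbitMap C n v ∈ closedCone K γ}

lemma orbitMap_mem_closedCone_of_succ (hγ : 0 < γ)
    (hC : ∀ n, MapsTo (C n).symm (openCone K γ) (openCone K γ'))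
    (h : orbitMap C (n + 1) v ∈ closedCone K γ) : orbitMap C n v ∈ closedCone K γ' := by
  simpa using mapsTo_closedCone (A := ((C (n + 1)).symm : E →L[ℝ] E)) hγ (hC (n + 1)) h

lemma orbitMap_mem_closedCone_of_le (hγ : 0 < γ) (hγ'γ : γ' ≤ γ)
    (hC : ∀ n, MapsTo (C n).symm (openCone K γ) (openCone K γ'))
    (h : orbitMap C n v ∈ closedCone K γ) (hmn : m ≤ n) : orbitMap C m v ∈ closedCone K γ := by
  induction hmn using Nat.decreasingInduction with
  | self => exact h
  | of_succ k _ ih => exact closedCone_mono hγ'γ (orbitMap_mem_closedCone_of_succ hγ hC ih)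

lemma orbitMap_mem_closedCone_of_mem_stableSet (hγ : 0 < γ)
    (hC : ∀ n, MapsTo (C n).symm (openCone K γ) (openCone K γ'))
    (hv : v ∈ stableSet K γ C) (n : ℕ) : orbitMap C n v ∈ closedCone K γ' :=
  orbitMap_mem_closedCone_of_succ hγ hC (hv (n + 1))

lemma biInter_preimage_eq_stableSet (hγ : 0 < γ) (hγ'γ : γ' ≤ γ)
    (hC : ∀ n, MapsTo (C n).symm (openCone K γ) (openCone K γ')) :
    ⋂ (n : ℕ) (_ : 1 ≤ n), orbitMap C n ⁻¹' closedCone K γ = stableSet K γ C := by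
  ext v
  simp only [mem_iInter, mem_preimage]
  exact ⟨fun h n => orbitMap_mem_closedCone_of_le hγ hγ'γ hC (h (n + 1) le_add_self) n.le_succ,
    fun h n _ => h n⟩

lemma isClosed_stableSet : IsClosed (stableSet K γ C) := by
  simp only [stableSet, ofPred_forall]
  exact isClosed_iInter fun n => isClosed_closedCone.preimage (orbitMap C n).continuous

lemma smul_mem_stableSet (hv : v ∈ stableSet K γ C) (c : ℝ) : c • v ∈ stableSet K γ C :=
  fun n => by rw [map_smul]; exact smul_mem_closedCone (hv n) c

lemma eq_zero_of_mem_stableSet_of_mem (hv : v ∈ stableSet K γ C) (hK : v ∈ K) : v = 0 :=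
  eq_zero_of_mem_closedCone_of_mem (hv 0) hK

lemma orbitMap_notMem_openCone (hγ'γ : γ' ≤ γ)
    (hC : ∀ n, MapsTo (C n).symm (openCone K γ) (openCone K γ')) (hw : w ∈ K) (n : ℕ) :
    orbitMap C n w ∉ openCone K γ := by
  induction n with
  | zero => exact notMem_openCone_of_mem hw
  | succ n ih => exact fun h => ih (openCone_mono hγ'γ (by simpa using hC (n + 1) h))

lemma not_bddBelow_setOf_add_smul_mem (hγ' : 0 ≤ γ') (hγ'γ : γ' < γ)
    (hC : ∀ n, MapsTo (C n).symm (openCone K γ) (openCone K γ'))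
    (hv' : v' ∈ stableSet K γ C) (hv : v' + w ∈ stableSet K γ C) (hw : w ∈ K)
    (hline : ∀ t : ℝ, v' + t • w ≠ 0) :
    ¬ BddBelow {t : ℝ | v' + t • w ∈ stableSet K γ C} := by
  have hγ : 0 < γ := hγ'.trans_lt hγ'γ
  set M := ((γ ^ 2 + γ' ^ 2) / (γ ^ 2 - γ' ^ 2)) ^ 2
  have hM : 1 ≤ M := one_le_pow₀ ((one_le_div (by nlinarith)).mpr (by nlinarith))
  refine not_bddBelow_of_sq_sub_le (L := 4 * (M - 1))
    (isClosed_stableSet.preimage (by fun_prop)) (by simpa using hv') ?_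
  intro s hs hs1 p hps hp
  obtain ⟨m, hm⟩ : ∃ m, orbitMap C m (v' + p • w) ∉ closedCone K γ := by
    simpa [stableSet] using hp
  have hcone : ∀ t : ℝ, v' + t • w ∈ stableSet K γ C →
      orbitMap C m (v' + t • w) ∈ closedCone K γ' :=
    fun t ht => orbitMap_mem_closedCone_of_mem_stableSet hγ hC ht m
  have hpos : ∀ t : ℝ, v' + t • w ∈ stableSet K γ C →
      0 < coneForm K γ (orbitMap C m (v' + t • w)) (orbitMap C m (v' + t • w)) :=
    fun t ht => coneForm_self_pos hγ' hγ'γ (hcone t ht)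
      fun h0 => hline t ((orbitMap C m).map_eq_zero_iff.mp h0)
  have h1 : v' + (1 : ℝ) • w ∈ stableSet K γ C := by simpa using hv
  refine sq_sub_le_of_cross_bound
    (q := fun s t : ℝ => coneForm K γ (orbitMap C m (v' + s • w)) (orbitMap C m (v' + t • w)))
    (fun s t => by simp only [map_add, map_smul]; exact coneForm_add_smul _ _ s t)
    ((notMem_openCone_iff_coneForm_nonpos hγ.le).mp (orbitMap_notMem_openCone hγ'γ.le hC hw m))
    hM hps hs1 ?_ (hpos s hs) (hpos 1 h1) (coneForm_sq_le hγ' hγ'γ (hcone s hs) (hcone 1 h1))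
  exact lt_of_not_ge fun h => hm ((mem_closedCone_iff_coneForm_nonneg hγ.le).mpr h)

theorem eq_of_mem_stableSet_of_sub_mem (hγ' : 0 ≤ γ') (hγ'γ : γ' < γ)
    (hC : ∀ n, MapsTo (C n).symm (openCone K γ) (openCone K γ'))
    (hv : v ∈ stableSet K γ C) (hv' : v' ∈ stableSet K γ C) (hK : v - v' ∈ K) : v = v' := by
  by_cases hline : ∃ t : ℝ, v' + t • (v - v') = 0
  · obtain ⟨t, ht⟩ := hline
    have hv'0 : v' = 0 := eq_zero_of_mem_stableSet_of_mem hv' <| by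
      rw [eq_neg_of_add_eq_zero_left ht]
      exact K.neg_mem (K.smul_mem t hK)
    subst hv'0
    rw [sub_zero] at hK
    exact eq_zero_of_mem_stableSet_of_mem hv hK
  · simp only [not_exists] at hline
    have hw := mem_of_not_bddBelow_setOf_add_smul_mem isClosed_stableSet
      (fun c _ hx => smul_mem_stableSet hx c)
      (not_bddBelow_setOf_add_smul_mem hγ' hγ'γ hC hv' (by rwa [add_sub_cancel]) hK hline)
    exact sub_eq_zero.mp (eq_zero_of_mem_stableSet_of_mem hw hK)

end Dynamics

section Existence

variable [FiniteDimensional ℝ E] {K : Submodule ℝ E} [K.HasOrthogonalProjection] {γ γ' : ℝ}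
  {C : ℕ → E ≃L[ℝ] E}

lemma isCompl_comap_orbitMap_orthogonal (hγ : 0 < γ) (hγ'γ : γ' ≤ γ)
    (hC : ∀ n, MapsTo (C n).symm (openCone K γ) (openCone K γ')) (n : ℕ) :
    IsCompl (Kᗮ.comap ((orbitMap C n).toLinearEquiv : E →ₗ[ℝ] E)) K := by
  refine (Submodule.isCompl_iff_disjoint _ _ ?_).mpr ?_
  · rw [Submodule.comap_equiv_eq_map_symm, LinearEquiv.finrank_map_eq, add_comm,
      K.finrank_add_finrank_orthogonal]
  · refine Submodule.disjoint_def.mpr fun y hy hK => eq_zero_of_mem_closedCone_of_mem (γ := γ) ?_ hK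
    exact orbitMap_mem_closedCone_of_le hγ hγ'γ hC
      (mem_closedCone_of_mem_orthogonal hγ.le hy) n.zero_le

lemma exists_clm_orbitMap_apply_mem_orthogonal (hγ : 0 < γ) (hγ'γ : γ' ≤ γ)
    (hC : ∀ n, MapsTo (C n).symm (openCone K γ) (openCone K γ')) (n : ℕ) :
    ∃ L : E →L[ℝ] E, ∀ v, orbitMap C n (L v) ∈ Kᗮ ∧ v - L v ∈ K ∧ ‖L v‖ ≤ (1 + γ) * ‖v‖ := by
  set h := isCompl_comap_orbitMap_orthogonal hγ hγ'γ hC n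
  refine ⟨LinearMap.toContinuousLinearMap (Submodule.projection _ K h), fun v => ?_⟩
  set L := Submodule.projection _ K h
  have hL : orbitMap C n (L v) ∈ Kᗮ := Submodule.projection_apply_mem h v
  have hK : v - L v ∈ K := Submodule.sub_projection_mem h v
  refine ⟨hL, hK, ?_⟩
  have hcone : L v ∈ closedCone K γ := orbitMap_mem_closedCone_of_le hγ hγ'γ hC (n := n) (m := 0)
    (mem_closedCone_of_mem_orthogonal hγ.le hL) n.zero_le
  have hQ : L v - K.starProjection (L v) = v - K.starProjection v := by
    have := K.starProjection_eq_self_iff.mpr hK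
    rw [map_sub] at this
    rw [← sub_eq_zero, show L v - K.starProjection (L v) - (v - K.starProjection v)
      = (K.starProjection v - K.starProjection (L v)) - (v - L v) by abel, this, sub_self]
  calc ‖L v‖ ≤ (1 + γ) * ‖L v - K.starProjection (L v)‖ := norm_le_of_mem_closedCone hcone
    _ = (1 + γ) * ‖v - K.starProjection v‖ := by rw [hQ]
    _ ≤ (1 + γ) * ‖v‖ := by
      gcongr
      simpa using Kᗮ.norm_starProjection_apply_le v

lemma exists_clm_forall_mem_stableSet (hγ' : 0 ≤ γ') (hγ'γ : γ' < γ)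
    (hC : ∀ n, MapsTo (C n).symm (openCone K γ) (openCone K γ')) :
    ∃ L : E →L[ℝ] E, ∀ v, L v ∈ stableSet K γ C ∧ v - L v ∈ K := by
  have hγ : 0 < γ := hγ'.trans_lt hγ'γ
  choose L hL using exists_clm_orbitMap_apply_mem_orthogonal hγ hγ'γ.le hC
  have hbound : ∀ n, L n ∈ Metric.closedBall (0 : E →L[ℝ] E) (1 + γ) := fun n => by
    rw [mem_closedBall_zero_iff]
    exact ContinuousLinearMap.opNorm_le_bound _ (by positivity) fun v => (hL n v).2.2
  obtain ⟨L₀, -, φ, hφ, hlim⟩ := tendsto_subseq_of_bounded Metric.isBounded_closedBall hbound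
  refine ⟨L₀, fun v => ?_⟩
  have hv : Tendsto (fun j => L (φ j) v) atTop (𝓝 (L₀ v)) :=
    ((ContinuousLinearMap.apply ℝ E v).continuous.tendsto L₀).comp hlim
  refine ⟨fun m => ?_, ?_⟩
  · refine (isClosed_closedCone.preimage (orbitMap C m).continuous).mem_of_tendsto hv ?_
    filter_upwards [eventually_ge_atTop m] with j hj
    exact orbitMap_mem_closedCone_of_le hγ hγ'γ.le hC
      (mem_closedCone_of_mem_orthogonal hγ.le (hL (φ j) v).1) (hj.trans hφ.le_apply)
  · exact K.closed_of_finiteDimensional.mem_of_tendsto (tendsto_const_nhds.sub hv)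
      (Eventually.of_forall fun j => (hL (φ j) v).2.1)

theorem exists_submodule_coe_eq_stableSet (hγ' : 0 ≤ γ') (hγ'γ : γ' < γ)
    (hC : ∀ n, MapsTo (C n).symm (openCone K γ) (openCone K γ')) :
    ∃ V : Submodule ℝ E, (V : Set E) = stableSet K γ C := by
  obtain ⟨L, hL⟩ := exists_clm_forall_mem_stableSet hγ' hγ'γ hC
  refine ⟨LinearMap.range (L : E →ₗ[ℝ] E), Subset.antisymm ?_ fun v hv => ⟨v, ?_⟩⟩
  · rintro _ ⟨v, rfl⟩
    exact (hL v).1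
  · exact eq_of_mem_stableSet_of_sub_mem hγ' hγ'γ hC (hL v).1 hv
      (by simpa using K.neg_mem (hL v).2)

end Existence

end InvariantCone

lemma coneLc_eq_closedCone {d k : ℕ} (E : Fin k → Submodule ℝ (Euc d)) (j : ℕ) (γ : ℝ) :
    coneLc E j γ = InvariantCone.closedCone (Vlow E j) γ := rfl

lemma coe_orbitMap_eq_compSeq {d : ℕ} (C : ℕ → Euc d ≃L[ℝ] Euc d) (n : ℕ) :
    ⇑(InvariantCone.orbitMap C n) = ⇑(compSeq (fun m => (C m : Euc d →L[ℝ] Euc d)) n) := by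
  induction n with
  | zero => rfl
  | succ n ih =>
    funext v
    simp [compSeq, ih]

theorem cone_intersection_is_subspace_general {d k : ℕ} (E : Fin k → Submodule ℝ (Euc d))
    (γ κ δ : ℝ) (hγ : 0 < γ) (hκδ : δ / 2 < κ)
    (C : ℕ → (Euc d ≃L[ℝ] Euc d))
    (hC : ∀ n : ℕ, ⇑(C n).symm '' coneL E (k - 1) γ ⊆
      coneL E (k - 1) (γ * Real.exp (-κ + δ / 2))) :
    ∃ V : Submodule ℝ (Euc d), (V : Set (Euc d)) =
      ⋂ (n : ℕ) (_ : 1 ≤ n),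
        (⇑(compSeq (fun m => ((C m : Euc d →L[ℝ] Euc d))) n)) ⁻¹' coneLc E (k - 1) γ := by
  have hγ' : 0 ≤ γ * Real.exp (-κ + δ / 2) := by positivity
  have hγ'γ : γ * Real.exp (-κ + δ / 2) < γ :=
    mul_lt_of_lt_one_right hγ (Real.exp_lt_one_iff.mpr (by linarith))
  have hmaps (n : ℕ) := Set.mapsTo_iff_image_subset.mpr (hC n)
  obtain ⟨V, hV⟩ := InvariantCone.exists_submodule_coe_eq_stableSet hγ' hγ'γ hmaps
  refine ⟨V, ?_⟩
  simp_rw [← coe_orbitMap_eq_compSeq, coneLc_eq_closedCone,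
    InvariantCone.biInter_preimage_eq_stableSet hγ hγ'γ.le hmaps, hV]

theorem cone_intersection_is_subspace {d k : ℕ} (E : Fin k → Submodule ℝ (Euc d))
    (horth : ∀ i j : Fin k, i ≠ j → ∀ v ∈ E i, ∀ w ∈ E j, (inner ℝ v w : ℝ) = 0)
    (hspan : (⨆ i, E i) = ⊤)
    (γ κ δ : ℝ) (hγ : 0 < γ) (hδ : 0 < δ) (hκδ : δ / 2 < κ)
    (C : ℕ → (Euc d ≃L[ℝ] Euc d))
    (hC : ∀ n : ℕ, ⇑(C n).symm '' coneL E (k - 1) γ ⊆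
      coneL E (k - 1) (γ * Real.exp (-κ + δ / 2))) :
    ∃ V : Submodule ℝ (Euc d), (V : Set (Euc d)) =
      ⋂ (n : ℕ) (_ : 1 ≤ n),
        (⇑(compSeq (fun m => ((C m : Euc d →L[ℝ] Euc d))) n)) ⁻¹' coneLc E (k - 1) γ :=
  cone_intersection_is_subspace_general E γ κ δ hγ hκδ C hC
end
end
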